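/- arXiv:1812.04996 — 7 statements merged into one kernel-verified Lean document; each statement's English description precedes it below -/
import Mathlib

section
/- Let k be an algebraically closed field of characteristic 3. The polynomial f(x) = x^9 + t x^5 + x over k, where t is a primitive element of F_9, has nonzero discriminant, and the associated Cartier–Manin matrix (the entrywise cube root of the matrix with rows (0,1,0,0), (t,0,0,0), (0,0,0,t), (0,0,1,0)) is invertible; hence the hyperelliptic curve y^2 = f(x) is ordinary (a-number 0). -/
/-!
In characteristic 3 the derivative of `f = x^9 + t x^5 + x` is `1 - t x^4`. All exponents of `f`
are `≡ 1` and all exponents of `f'` are `≡ 0 (mod 4)`, so the Sylvester matrix of `f` and `f'`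
only has nonzero entries at positions `(i, j)` with `i ≡ j (mod 4)`. Sorting rows and columns by
residue makes it block diagonal, with four blocks of determinant `1 + 2t^2 = 1 - t^2`, which is
nonzero because `t` has order 8.

If `H` is the entrywise cube root of `A`, applying Frobenius to `det H` gives
`(det H)^3 = det A = t^2 ≠ 0`, so `H` is invertible.
-/

open Polynomial Matrix

/-- Discriminant of a (monic) degree-9 polynomial, defined as the determinant of the
17×17 Sylvester matrix of `f` (formal degree 9) and its derivative (formal degree 8).
For monic `f` of degree 9 this equals the discriminant, since `(-1)^(9·8/2) = 1`. -/
noncomputable def disc9 {k : Type*} [Field k] (f : Polynomial k) : k :=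
  (Matrix.of fun i j : Fin 17 =>
    if (i : ℕ) < 8 then
      (if (j : ℕ) ≤ (i : ℕ) + 9 then f.coeff (9 + (i : ℕ) - (j : ℕ)) else 0)
    else
      (if (j : ℕ) ≤ (i : ℕ) then (Polynomial.derivative f).coeff ((i : ℕ) - (j : ℕ)) else 0)).det

theorem isUnit_det_of_pow_apply_eq {R : Type*} [CommRing R] (p : ℕ) [ExpChar R p]
    {n : Type*} [Fintype n] [DecidableEq n] {H A : Matrix n n R}
    (hH : ∀ i j, H i j ^ p = A i j) (hA : IsUnit A.det) : IsUnit H.det := by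
  have hmap : H.map (frobenius R p) = A := ext hH
  rwa [← hmap, ← RingHom.mapMatrix_apply, ← RingHom.map_det, frobenius_def,
    isUnit_pow_iff (expChar_pos R p).ne'] at hA

section Determinants

variable {R : Type*} [CommRing R] (t : R)

theorem det_cartierManin :
    (!![0, 1, 0, 0; t, 0, 0, 0; 0, 0, 0, t; 0, 0, 1, 0] : Matrix (Fin 4) (Fin 4) R).det =
      t ^ 2 := by
  simp [det_succ_row_zero, Fin.sum_univ_succ, Fin.succAbove]
  ring

def sylvesterBlock : Matrix (Fin 4) (Fin 4) R :=
  !![1, t, 1, 0; 0, 1, t, 1; 0, -t, 1, 0; 0, 0, -t, 1]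

def sylvesterBlockZero : Matrix (Fin 5) (Fin 5) R :=
  !![1, t, 1, 0, 0; 0, 1, t, 1, 0; 0, -t, 1, 0, 0; 0, 0, -t, 1, 0; 0, 0, 0, -t, 1]

theorem det_sylvesterBlock : (sylvesterBlock t).det = 1 + 2 * t ^ 2 := by
  simp [sylvesterBlock, det_succ_row_zero, Fin.sum_univ_succ, Fin.succAbove]
  ring

theorem det_sylvesterBlockZero : (sylvesterBlockZero t).det = 1 + 2 * t ^ 2 := by
  simp [sylvesterBlockZero, det_succ_row_zero, Fin.sum_univ_succ, Fin.succAbove]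
  ring

end Determinants

noncomputable def sylvester9 {k : Type*} [Field k] (f : k[X]) : Matrix (Fin 17) (Fin 17) k :=
  Matrix.of fun i j : Fin 17 =>
    if (i : ℕ) < 8 then
      (if (j : ℕ) ≤ (i : ℕ) + 9 then f.coeff (9 + (i : ℕ) - (j : ℕ)) else 0)
    else
      (if (j : ℕ) ≤ (i : ℕ) then (derivative f).coeff ((i : ℕ) - (j : ℕ)) else 0)

theorem disc9_eq_det_sylvester9 {k : Type*} [Field k] (f : k[X]) :
    disc9 f = (sylvester9 f).det :=
  rfl

def finResidueMod4Equiv : Fin 5 ⊕ Fin 4 ⊕ Fin 4 ⊕ Fin 4 ≃ Fin 17 where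
  toFun :=
    Sum.elim (fun i => ⟨4 * i, by omega⟩) <| Sum.elim (fun i => ⟨4 * i + 1, by omega⟩) <|
      Sum.elim (fun i => ⟨4 * i + 2, by omega⟩) fun i => ⟨4 * i + 3, by omega⟩
  invFun i :=
    if h₀ : (i : ℕ) % 4 = 0 then .inl ⟨i / 4, by omega⟩
    else if h₁ : (i : ℕ) % 4 = 1 then .inr <| .inl ⟨i / 4, by omega⟩
    else if h₂ : (i : ℕ) % 4 = 2 then .inr <| .inr <| .inl ⟨i / 4, by omega⟩
    else .inr <| .inr <| .inr ⟨i / 4, by omega⟩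
  left_inv := by decide
  right_inv := by decide

section CharThree

variable {k : Type*} [Field k] (t : k)

theorem coeff_X_pow_nine_add_C_mul_X_pow_five_add_X (n : ℕ) :
    (X ^ 9 + C t * X ^ 5 + X : k[X]).coeff n =
      if n = 9 then 1 else if n = 5 then t else if n = 1 then 1 else 0 := by
  simp only [coeff_add, coeff_C_mul, coeff_X_pow, coeff_X]
  split_ifs <;> first | omega | simp

variable [CharP k 3]

theorem derivative_X_pow_nine_add_C_mul_X_pow_five_add_X :
    derivative (X ^ 9 + C t * X ^ 5 + X : k[X]) = 1 - C t * X ^ 4 := by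
  have h3 : (3 : k[X]) = 0 := CharP.cast_eq_zero k[X] 3
  simp only [derivative_add, derivative_X_pow, derivative_C_mul_X_pow, derivative_X, C_mul,
    map_natCast]
  linear_combination (3 * X ^ 8 + 2 * C t * X ^ 4) * h3

theorem coeff_derivative_X_pow_nine_add_C_mul_X_pow_five_add_X (n : ℕ) :
    (derivative (X ^ 9 + C t * X ^ 5 + X : k[X])).coeff n =
      if n = 4 then -t else if n = 0 then 1 else 0 := by
  rw [derivative_X_pow_nine_add_C_mul_X_pow_five_add_X]
  simp only [coeff_sub, coeff_one, coeff_C_mul, coeff_X_pow]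
  split_ifs <;> first | omega | simp

theorem sylvester9_submatrix_finResidueMod4Equiv :
    (sylvester9 (X ^ 9 + C t * X ^ 5 + X)).submatrix finResidueMod4Equiv finResidueMod4Equiv =
      fromBlocks (sylvesterBlockZero t) 0 0 (fromBlocks (sylvesterBlock t) 0 0
        (fromBlocks (sylvesterBlock t) 0 0 (sylvesterBlock t))) := by
  have hcoeff := coeff_X_pow_nine_add_C_mul_X_pow_five_add_X t
  have hderiv := coeff_derivative_X_pow_nine_add_C_mul_X_pow_five_add_X t
  generalize (X ^ 9 + C t * X ^ 5 + X : k[X]) = f at hcoeff hderiv ⊢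
  ext (i | i | i | i) (j | j | j | j) <;>
    simp only [sylvester9, finResidueMod4Equiv, submatrix_apply, of_apply, Equiv.coe_fn_mk,
      Sum.elim_inl, Sum.elim_inr, fromBlocks_apply₁₁, fromBlocks_apply₁₂,
      fromBlocks_apply₂₁, fromBlocks_apply₂₂, Matrix.zero_apply, hcoeff, hderiv] <;>
    fin_cases i <;> fin_cases j <;> simp [sylvesterBlock, sylvesterBlockZero]

theorem disc9_X_pow_nine_add_C_mul_X_pow_five_add_X :
    disc9 (X ^ 9 + C t * X ^ 5 + X) = (1 - t ^ 2) ^ 4 := by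
  have h : (1 : k) + 2 * t ^ 2 = 1 - t ^ 2 := by
    linear_combination t ^ 2 * (CharP.cast_eq_zero k 3 : (3 : k) = 0)
  rw [disc9_eq_det_sylvester9, ← det_submatrix_equiv_self finResidueMod4Equiv,
    sylvester9_submatrix_finResidueMod4Equiv, det_fromBlocks_zero₂₁, det_fromBlocks_zero₂₁,
    det_fromBlocks_zero₂₁, det_sylvesterBlockZero, det_sylvesterBlock, h]
  ring

end CharThree

theorem stmt1_general {k : Type*} [Field k] [CharP k 3]
    (t : k) (ht8 : t ^ 8 = 1) (htprim : ∀ n : ℕ, 0 < n → n < 8 → t ^ n ≠ 1)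
    (f : k[X]) (hf : f = X ^ 9 + C t * X ^ 5 + X) :
    disc9 f ≠ 0 ∧
      ∀ H : Matrix (Fin 4) (Fin 4) k,
        (∀ i j, H i j ^ 3 = !![0, 1, 0, 0; t, 0, 0, 0; 0, 0, 0, t; 0, 0, 1, 0] i j) →
        IsUnit H.det ∧ H.rank = 4 ∧ 4 - H.rank = 0 := by
  have ht : t ≠ 0 := by
    rintro rfl
    simp at ht8
  have ht2 : 1 - t ^ 2 ≠ 0 := sub_ne_zero.2 (htprim 2 two_pos (by norm_num)).symm
  refine ⟨?_, fun H hH => ?_⟩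
  · rw [hf, disc9_X_pow_nine_add_C_mul_X_pow_five_add_X]
    exact pow_ne_zero 4 ht2
  have : ExpChar k 3 := .prime Nat.prime_three
  have hdet : IsUnit H.det :=
    isUnit_det_of_pow_apply_eq 3 hH ((det_cartierManin t).symm ▸ (pow_ne_zero 2 ht).isUnit)
  have hrank : H.rank = 4 := by
    simpa using rank_of_isUnit H ((isUnit_iff_isUnit_det H).2 hdet)
  exact ⟨hdet, hrank, by rw [hrank]⟩

/-- for `t` a primitive element of `𝔽₉` (a multiplicative generator, i.e. of
order 8) inside an algebraically closed field of characteristic 3, the polynomial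
`f = x^9 + t x^5 + x` has nonzero discriminant and the Cartier–Manin matrix of
`y² = f(x)` (entrywise cube root of the displayed matrix) is invertible, so the curve is
ordinary (a-number `4 - rank H = 0`). -/
theorem stmt1 {k : Type*} [Field k] [IsAlgClosed k] [CharP k 3]
    (t : k) (ht8 : t ^ 8 = 1) (htprim : ∀ n : ℕ, 0 < n → n < 8 → t ^ n ≠ 1)
    (f : k[X]) (hf : f = X ^ 9 + C t * X ^ 5 + X) :
    disc9 f ≠ 0 ∧
      ∀ H : Matrix (Fin 4) (Fin 4) k,
        (∀ i j, H i j ^ 3 = !![0, 1, 0, 0; t, 0, 0, 0; 0, 0, 0, t; 0, 0, 1, 0] i j) →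
        IsUnit H.det ∧ H.rank = 4 ∧ 4 - H.rank = 0 :=
  stmt1_general t ht8 htprim f hf
end

section
/- Let k be an algebraically closed field of characteristic 3 and consider f(x) = x^9 + a_8 x^8 + ... + a_2 x^2 + x with nonzero discriminant. If a_2 = a_8 = 0 and the Cartier–Manin matrix of y^2 = f(x) has rank greater than 2, then a_5 ≠ 0 and the rank is exactly 4. -/
open Polynomial Matrix

/-!
If `a5 = 0`, the first and last columns of the entrywise cube of `H` vanish, hence so do those
of `H`, and `rank H ≤ 2`. Otherwise, since cubing is the Frobenius ring endomorphism in
characteristic 3, `(det H)^3` is the determinant `a5^2` of the cubed matrix, so `H` is invertible.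
-/

namespace Matrix

variable {m n R : Type*} [Fintype n]

theorem rank_le_card_of_forall_notMem_eq_zero [Field R] (A : Matrix m n R) (s : Finset n)
    (hA : ∀ i, ∀ j ∉ s, A i j = 0) : A.rank ≤ s.card := by
  classical
  set D : Matrix n n R := diagonal fun j => if j ∈ s then 1 else 0
  have hAD : A * D = A := by
    ext i j
    by_cases hj : j ∈ s <;> simp [D, hj, hA i j]
  calc A.rank = (A * D).rank := by rw [hAD]
    _ ≤ D.rank := rank_mul_le_right A D
    _ = s.card := by simp [D, rank_diagonal, Fintype.card_subtype]

theorem det_pow_eq_of_forall_pow_eq [CommRing R] [DecidableEq n] (p : ℕ) [ExpChar R p]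
    {A B : Matrix n n R} (h : ∀ i j, A i j ^ p = B i j) : A.det ^ p = B.det := by
  have hB : A.map (frobenius R p) = B := by
    ext i j
    exact h i j
  rw [← hB, ← RingHom.mapMatrix_apply, ← RingHom.map_det, frobenius_def]

end Matrix

theorem det_cartierManin_cube {R : Type*} [CommRing R] (a3 a4 a5 a6 a7 : R) :
    (!![0, 1, 0, 0; a5, a4, a3, 0; 0, a7, a6, a5; 0, 0, 1, 0] : Matrix (Fin 4) (Fin 4) R).det =
      a5 ^ 2 := by
  simp [det_succ_row_zero, Fin.sum_univ_succ, Fin.succAbove, sq]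

theorem stmt2_general {k : Type*} [Field k] [CharP k 3]
    (a3 a4 a5 a6 a7 : k)
    (H : Matrix (Fin 4) (Fin 4) k)
    (hH : ∀ i j, H i j ^ 3 =
      !![0, 1, 0, 0; a5, a4, a3, 0; 0, a7, a6, a5; 0, 0, 1, 0] i j)
    (hrank : 2 < H.rank) :
    a5 ≠ 0 ∧ H.rank = 4 := by
  have ha5 : a5 ≠ 0 := by
    rintro rfl
    have hcols : ∀ i, ∀ j ∉ ({1, 2} : Finset (Fin 4)), H i j = 0 := by
      intro i j hj
      refine (pow_eq_zero_iff three_ne_zero).mp ?_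
      rw [hH]
      fin_cases i <;> fin_cases j <;> simp_all
    have hle := H.rank_le_card_of_forall_notMem_eq_zero _ hcols
    rw [Finset.card_pair (by decide)] at hle
    omega
  have hdet : H.det ≠ 0 := by
    have hcube : H.det ^ 3 = a5 ^ 2 := by
      rw [det_pow_eq_of_forall_pow_eq 3 hH, det_cartierManin_cube]
    exact (pow_ne_zero_iff three_ne_zero).mp (hcube ▸ pow_ne_zero 2 ha5)
  exact ⟨ha5, by simpa using rank_of_det_ne_zero hdet⟩

/-- char 3, `f = x^9 + a_8x^8 + ⋯ + a_2x^2 + x` with nonzero discriminant and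
`a_2 = a_8 = 0`. If the Cartier–Manin matrix `H` has rank > 2, then `a_5 ≠ 0` and the rank
is exactly 4. -/
theorem stmt2 {k : Type*} [Field k] [IsAlgClosed k] [CharP k 3]
    (a3 a4 a5 a6 a7 : k) (f : k[X])
    (hf : f = X ^ 9 + C a7 * X ^ 7 + C a6 * X ^ 6 + C a5 * X ^ 5 +
      C a4 * X ^ 4 + C a3 * X ^ 3 + X)
    (hdisc : disc9 f ≠ 0)
    (H : Matrix (Fin 4) (Fin 4) k)
    (hH : ∀ i j, H i j ^ 3 =
      !![0, 1, 0, 0; a5, a4, a3, 0; 0, a7, a6, a5; 0, 0, 1, 0] i j)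
    (hrank : 2 < H.rank) :
    a5 ≠ 0 ∧ H.rank = 4 :=
  stmt2_general a3 a4 a5 a6 a7 H hH hrank
end

section
/- Let k be an algebraically closed field of characteristic 3 and f(x) = x^9 + a_8 x^8 + ... + a_2 x^2 + x. If a_2 a_8 ≠ 0 and the second and third rows of the 4×4 matrix with rows (a_2,1,0,0), (a_5,a_4,a_3,a_2), (a_8,a_7,a_6,a_5), (0,0,1,a_8) are k-linear combinations of the first and fourth rows, then a_3 = a_2/a_8, a_4 = a_5/a_2, a_6 = a_5/a_8, a_7 = a_8/a_2, and f(x) = (x^2 + (a_5/a_8)^{1/3} x + (a_2/a_8)^{1/3})^3 · (x^3 + a_8 x^2 + (a_8/a_2) x); in particular f does not have distinct roots. -/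
open Polynomial Matrix

/-! Comparing entries, the row relations force `b = a₄, c = a₃` with `a₂ a₄ = a₅, a₈ a₃ = a₂`, and
`s = a₇, t = a₆` with `a₂ a₇ = a₈, a₈ a₆ = a₅`. Substituting these coefficients, `f` factors as
`(x⁶ + (a₅/a₈) x³ + a₂/a₈) (x³ + a₈ x² + (a₈/a₂) x)`, and in characteristic 3 the first factor is
the cube of `x² + u x + v` for cube roots `u, v` of `a₅/a₈, a₂/a₈`, so `f` has a repeated factor. -/

theorem eq_div_of_smul_add_smul_eq {K : Type*} [Field K] {p q b c x₀ x₁ x₂ x₃ : K}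
    (hp : p ≠ 0) (hq : q ≠ 0)
    (h : ∀ j : Fin 4, b * ![p, 1, 0, 0] j + c * ![0, 0, 1, q] j = ![x₀, x₁, x₂, x₃] j) :
    x₁ = x₀ / p ∧ x₂ = x₃ / q := by
  obtain ⟨h₀, h₁, h₂, h₃⟩ : b * p = x₀ ∧ b = x₁ ∧ c = x₂ ∧ c * q = x₃ := by
    simpa using And.intro (h 0) (And.intro (h 1) (And.intro (h 2) (h 3)))
  exact ⟨by rw [eq_div_iff hp, ← h₁, h₀], by rw [eq_div_iff hq, ← h₂, h₃]⟩

theorem X_sq_add_C_mul_X_add_C_pow_three {R : Type*} [CommRing R] [CharP R 3] (u v : R) :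
    (X ^ 2 + C u * X + C v : R[X]) ^ 3 = X ^ 6 + C (u ^ 3) * X ^ 3 + C (v ^ 3) := by
  rw [add_pow_char, add_pow_char, mul_pow, ← pow_mul, C_pow, C_pow]

theorem not_isUnit_X_sq_add_C_mul_X_add_C {R : Type*} [CommRing R] [Nontrivial R] (u v : R) :
    ¬IsUnit (X ^ 2 + C u * X + C v : R[X]) := by
  have hmonic : (X ^ 2 + C u * X + C v : R[X]).Monic := by monicity!
  have hdeg : (X ^ 2 + C u * X + C v : R[X]).natDegree = 2 := by compute_degree!
  rw [hmonic.isUnit_iff]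
  intro h
  simp [h] at hdeg

theorem not_squarefree_pow_three_mul {R : Type*} [CommMonoid R] {g : R} (hg : ¬IsUnit g) (h : R) :
    ¬Squarefree (g ^ 3 * h) :=
  fun hsq => hg <| hsq g ⟨g * h, by simp only [pow_three, mul_assoc]⟩

theorem nonic_eq_sextic_mul_cubic {K : Type*} [Field K] {a₂ a₅ a₈ : K}
    (ha₂ : a₂ ≠ 0) (ha₈ : a₈ ≠ 0) :
    X ^ 9 + C a₈ * X ^ 8 + C (a₈ / a₂) * X ^ 7 + C (a₅ / a₈) * X ^ 6 + C a₅ * X ^ 5 +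
        C (a₅ / a₂) * X ^ 4 + C (a₂ / a₈) * X ^ 3 + C a₂ * X ^ 2 + X =
      (X ^ 6 + C (a₅ / a₈) * X ^ 3 + C (a₂ / a₈)) * (X ^ 3 + C a₈ * X ^ 2 + C (a₈ / a₂) * X) := by
  have h₅₈ : C (a₅ / a₈) * C a₈ = (C a₅ : K[X]) := by rw [← C_mul, div_mul_cancel₀ _ ha₈]
  have h₂₈ : C (a₂ / a₈) * C a₈ = (C a₂ : K[X]) := by rw [← C_mul, div_mul_cancel₀ _ ha₈]
  have h₅₂ : C (a₅ / a₈) * C (a₈ / a₂) = (C (a₅ / a₂) : K[X]) := by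
    rw [← C_mul, div_mul_div_cancel₀ ha₈]
  have h₂₂ : C (a₂ / a₈) * C (a₈ / a₂) = (1 : K[X]) := by
    rw [← C_mul, div_mul_div_cancel₀ ha₈, div_self ha₂, C_1]
  linear_combination (-(X : K[X]) ^ 5) * h₅₈ - X ^ 4 * h₅₂ - X ^ 2 * h₂₈ - X * h₂₂

/-- char 3, algebraically closed. If `a_2a_8 ≠ 0` and the second and third rows
of the displayed matrix are linear combinations of the first and fourth rows, then
`a_3 = a_2/a_8`, `a_4 = a_5/a_2`, `a_6 = a_5/a_8`, `a_7 = a_8/a_2`, and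
`f = (x² + (a_5/a_8)^{1/3} x + (a_2/a_8)^{1/3})³ (x³ + a_8 x² + (a_8/a_2) x)`
(for the cube roots `u, v`); in particular `f` does not have distinct roots. -/
theorem stmt4 {k : Type*} [Field k] [IsAlgClosed k] [CharP k 3]
    (a2 a3 a4 a5 a6 a7 a8 : k) (f : k[X])
    (hf : f = X ^ 9 + C a8 * X ^ 8 + C a7 * X ^ 7 + C a6 * X ^ 6 + C a5 * X ^ 5 +
      C a4 * X ^ 4 + C a3 * X ^ 3 + C a2 * X ^ 2 + X)
    (ha : a2 * a8 ≠ 0)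
    (M : Matrix (Fin 4) (Fin 4) k)
    (hM : M = !![a2, 1, 0, 0; a5, a4, a3, a2; a8, a7, a6, a5; 0, 0, 1, a8])
    (hrows : ∃ b c s t : k, ∀ j : Fin 4,
      b * M 0 j + c * M 3 j = M 1 j ∧ s * M 0 j + t * M 3 j = M 2 j) :
    a3 = a2 / a8 ∧ a4 = a5 / a2 ∧ a6 = a5 / a8 ∧ a7 = a8 / a2 ∧
    (∀ u v : k, u ^ 3 = a5 / a8 → v ^ 3 = a2 / a8 →
      f = (X ^ 2 + C u * X + C v) ^ 3 *
        (X ^ 3 + C a8 * X ^ 2 + C (a8 / a2) * X)) ∧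
    ¬ Squarefree f := by
  obtain ⟨ha2, ha8⟩ := mul_ne_zero_iff.mp ha
  obtain ⟨b, c, s, t, h⟩ := hrows
  subst hM
  obtain ⟨ha4, ha3⟩ := eq_div_of_smul_add_smul_eq ha2 ha8 fun j => (h j).1
  obtain ⟨ha7, ha6⟩ := eq_div_of_smul_add_smul_eq ha2 ha8 fun j => (h j).2
  have hfactor : ∀ u v : k, u ^ 3 = a5 / a8 → v ^ 3 = a2 / a8 →
      f = (X ^ 2 + C u * X + C v) ^ 3 * (X ^ 3 + C a8 * X ^ 2 + C (a8 / a2) * X) := by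
    intro u v hu hv
    rw [X_sq_add_C_mul_X_add_C_pow_three, hu, hv, hf, ha3, ha4, ha6, ha7]
    exact nonic_eq_sextic_mul_cubic ha2 ha8
  refine ⟨ha3, ha4, ha6, ha7, hfactor, ?_⟩
  obtain ⟨u, hu⟩ := IsAlgClosed.exists_pow_nat_eq (a5 / a8) three_pos
  obtain ⟨v, hv⟩ := IsAlgClosed.exists_pow_nat_eq (a2 / a8) three_pos
  rw [hfactor u v hu hv]
  exact not_squarefree_pow_three_mul (not_isUnit_X_sq_add_C_mul_X_add_C u v) _
end

section
/- Let k be an algebraically closed field of characteristic 3. The hyperelliptic genus-4 curve y^2 = f(x) with f(x) = x^9 + x^3 + 2x^7 + x (i.e., a_3 = 1, a_7 = 2, all other middle coefficients 0) satisfies disc(f) ≠ 0 and its Cartier–Manin matrix has rank exactly 2; hence the curve has a-number 2. -/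
/-!
The Sylvester matrix defining `disc9 f` is, after reversing the order of its columns and of each
of its two blocks of rows (even permutations), the transposed Sylvester matrix of `f'` and `f`, so
`disc9 f` is the resultant of `f'` and `f`. In characteristic 3 one has
`f' = 2x⁶ + 1 = 2 (x - 1)³ (x + 1)³`, and `f(1) = -1`, `f(-1) = 1` are nonzero, so `f` is
separable and the resultant does not vanish.

Cube roots are unique in characteristic 3 and the entries `0, 1, 2` are their own cubes, so the
matrix `H` is the displayed matrix itself. Its rows are `e₁, e₂, 2e₁, e₂`, so it factors
through `k²` and has the identity of size 2 as a minor: its rank is 2.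
-/

open Polynomial Matrix

def blockRev : Equiv.Perm (Fin 17) :=
  Function.Involutive.toPerm
    (fun i => if h : (i : ℕ) < 8 then ⟨7 - i, by omega⟩ else ⟨24 - i, by omega⟩)
    (by unfold Function.Involutive; decide)

lemma sign_blockRev : Equiv.Perm.sign blockRev = 1 := by decide

lemma sign_revPerm_seventeen : Equiv.Perm.sign (Fin.revPerm : Equiv.Perm (Fin 17)) = 1 := by
  decide

theorem disc9_eq_resultant {k : Type*} [Field k] (f : k[X]) (hf : f.natDegree ≤ 9) :
    disc9 f = resultant (derivative f) f 8 9 := by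
  have hf' : (derivative f).natDegree ≤ 8 := (natDegree_derivative_le f).trans (by omega)
  set M : Matrix (Fin 17) (Fin 17) k := Matrix.of fun i j =>
      if (i : ℕ) < 8 then
        (if (j : ℕ) ≤ (i : ℕ) + 9 then f.coeff (9 + (i : ℕ) - (j : ℕ)) else 0)
      else
        (if (j : ℕ) ≤ (i : ℕ) then (derivative f).coeff ((i : ℕ) - (j : ℕ)) else 0) with hM
  have hS : M.submatrix blockRev Fin.revPerm = (sylvester (derivative f) f 8 9)ᵀ := by
    ext r c
    refine Fin.addCases (m := 8) (n := 9) (fun r => ?_) (fun r => ?_) r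
    · simp only [hM, of_apply, submatrix_apply, transpose_apply, sylvester, Fin.addCases_left,
        blockRev, Function.Involutive.coe_toPerm, Fin.revPerm_apply, Set.mem_Icc,
        Fin.val_castAdd, Fin.val_rev, dif_pos r.isLt]
      split_ifs <;> first | rfl | omega | (congr 1; omega) |
        exact coeff_eq_zero_of_natDegree_lt (by omega)
    · simp only [hM, of_apply, submatrix_apply, transpose_apply, sylvester, Fin.addCases_right,
        blockRev, Function.Involutive.coe_toPerm, Fin.revPerm_apply, Set.mem_Icc,
        Fin.val_natAdd, Fin.val_rev, dif_neg (show ¬ 8 + (r : ℕ) < 8 by omega)]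
      split_ifs <;> first | rfl | omega | (congr 1; omega) |
        exact coeff_eq_zero_of_natDegree_lt (by omega)
  have hdet : (M.submatrix blockRev Fin.revPerm).det = M.det := by
    rw [show M.submatrix blockRev Fin.revPerm = (M.submatrix blockRev id).submatrix id Fin.revPerm
      from rfl, det_permute', det_permute, sign_blockRev, sign_revPerm_seventeen]
    simp
  rw [disc9, ← hM, ← hdet, hS, det_transpose, resultant]

theorem disc9_ne_zero_of_separable {k : Type*} [Field k] {f : k[X]} (hdeg : f.natDegree = 9)
    (hsep : f.Separable) : disc9 f ≠ 0 := by
  set d := (derivative f).natDegree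
  have hd : d ≤ 8 := (natDegree_derivative_le f).trans (by omega)
  have hlead : f.coeff 9 ≠ 0 := by
    rw [← hdeg]
    exact leadingCoeff_ne_zero.2 (ne_zero_of_natDegree_gt (n := 0) (by omega))
  have hres : resultant (derivative f) f d 9 ≠ 0 := by
    rw [← hdeg]
    exact resultant_ne_zero _ _ ((separable_def f).1 hsep).symm
  rw [disc9_eq_resultant f hdeg.le, show 8 = d + (8 - d) by omega,
    resultant_add_left_deg _ _ _ _ _ le_rfl]
  exact mul_ne_zero (mul_ne_zero (pow_ne_zero _ (by simp)) (pow_ne_zero _ hlead)) hres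

lemma isCoprime_X_sub_C_pow_right {K : Type*} [Field K] {f : K[X]} {a : K} (h : f.eval a ≠ 0)
    (n : ℕ) : IsCoprime f ((X - C a) ^ n) :=
  ((irreducible_X_sub_C a).coprime_iff_not_dvd.2 (mt dvd_iff_isRoot.1 h)).symm.pow_right

noncomputable def curvePoly (k : Type*) [Field k] : k[X] := X ^ 9 + C 2 * X ^ 7 + X ^ 3 + X

lemma natDegree_curvePoly {k : Type*} [Field k] : (curvePoly k).natDegree = 9 := by
  unfold curvePoly; compute_degree!

section CharThree

variable {k : Type*} [Field k] [CharP k 3]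

lemma derivative_curvePoly :
    derivative (curvePoly k) = C 2 * ((X - C 1) ^ 3 * (X - C (-1)) ^ 3) := by
  have h3 : (3 : k[X]) = 0 := CharP.cast_eq_zero k[X] 3
  simp only [curvePoly, derivative_add, derivative_X_pow, derivative_C_mul, derivative_X]
  simp only [map_neg, C_1, C_ofNat, Nat.cast_ofNat]
  linear_combination (3 * X ^ 8 + 4 * X ^ 6 + 2 * X ^ 4 - X ^ 2 + 1) * h3

lemma eval_one_curvePoly : (curvePoly k).eval 1 = -1 := by
  have h3 : (3 : k) = 0 := CharP.cast_eq_zero k 3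
  simp [curvePoly]
  linear_combination 2 * h3

lemma eval_neg_one_curvePoly : (curvePoly k).eval (-1) = 1 := by
  have h3 : (3 : k) = 0 := CharP.cast_eq_zero k 3
  simp [curvePoly]
  linear_combination -2 * h3

lemma separable_curvePoly : (curvePoly k).Separable := by
  have h2 : (2 : k) ≠ 0 := Ring.two_ne_zero (by rw [ringChar.eq k 3]; decide)
  rw [separable_def, derivative_curvePoly, isCoprime_mul_unit_left_right (isUnit_C.2 h2.isUnit)]
  exact (isCoprime_X_sub_C_pow_right (by simp [eval_one_curvePoly]) 3).mul_right
    (isCoprime_X_sub_C_pow_right (by simp [eval_neg_one_curvePoly]) 3)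

end CharThree

lemma Matrix.eq_of_forall_pow_char_eq {K m n : Type*} [Field K] (p : ℕ) [ExpChar K p]
    {A B : Matrix m n K} (h : ∀ i j, A i j ^ p = B i j ^ p) : A = B :=
  Matrix.ext fun i j => frobenius_inj K p (h i j)

theorem Matrix.rank_eq_of_eq_mul_of_mul_mul_eq_one {K m n : Type*} [Field K] [Fintype m]
    [Fintype n] {r : ℕ} {T : Matrix m n K} (A : Matrix m (Fin r) K) (B : Matrix (Fin r) n K)
    (L : Matrix (Fin r) m K) (R : Matrix n (Fin r) K) (hT : T = A * B) (hLTR : L * T * R = 1) :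
    T.rank = r := by
  apply le_antisymm
  · calc T.rank ≤ A.rank := hT ▸ rank_mul_le_left A B
      _ ≤ r := by simpa using A.rank_le_card_width
  · calc r = (L * T * R).rank := by rw [hLTR, rank_one, Fintype.card_fin]
      _ ≤ (L * T).rank := rank_mul_le_left _ _
      _ ≤ T.rank := rank_mul_le_right _ _

/-- The matrix `(a₂,1,0,0; a₅,a₄,a₃,a₂; a₈,a₇,a₆,a₅; 0,0,1,a₈)` for `curvePoly`, whose entrywise
cube root is the Cartier–Manin matrix. -/
def cartierManinCube (K : Type*) [Field K] : Matrix (Fin 4) (Fin 4) K :=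
  !![0, 1, 0, 0; 0, 0, 1, 0; 0, 2, 0, 0; 0, 0, 1, 0]

lemma rank_cartierManinCube {K : Type*} [Field K] : (cartierManinCube K).rank = 2 :=
  rank_eq_of_eq_mul_of_mul_mul_eq_one !![1, 0; 0, 1; 2, 0; 0, 1] !![0, 1, 0, 0; 0, 0, 1, 0]
    !![1, 0, 0, 0; 0, 1, 0, 0] !![0, 0; 1, 0; 0, 1; 0, 0]
    (by simp [cartierManinCube]) (by simp [cartierManinCube, one_fin_two])

lemma cartierManinCube_pow_three {k : Type*} [Field k] [CharP k 3] (i j : Fin 4) :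
    cartierManinCube k i j ^ 3 = cartierManinCube k i j := by
  have h3 : (3 : k) = 0 := CharP.cast_eq_zero k 3
  fin_cases i <;> fin_cases j <;> simp [cartierManinCube]
  linear_combination 2 * h3

theorem stmt5_general {k : Type*} [Field k] [CharP k 3]
    (f : k[X]) (hf : f = X ^ 9 + C 2 * X ^ 7 + X ^ 3 + X) :
    disc9 f ≠ 0 ∧
      ∀ H : Matrix (Fin 4) (Fin 4) k,
        (∀ i j, H i j ^ 3 = !![0, 1, 0, 0; 0, 0, 1, 0; 0, 2, 0, 0; 0, 0, 1, 0] i j) →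
        H.rank = 2 ∧ 4 - H.rank = 2 := by
  have hf : f = curvePoly k := hf
  refine ⟨hf ▸ disc9_ne_zero_of_separable natDegree_curvePoly separable_curvePoly,
    fun H hH => ?_⟩
  have hHT : H = cartierManinCube k :=
    eq_of_forall_pow_char_eq 3 fun i j => (hH i j).trans (cartierManinCube_pow_three i j).symm
  rw [hHT, rank_cartierManinCube]
  exact ⟨rfl, rfl⟩

/-- char 3, the hyperelliptic curve `y² = x^9 + 2x^7 + x^3 + x`
(`a_3 = 1, a_7 = 2`, all other middle coefficients 0) has nonzero discriminant and its
Cartier–Manin matrix has rank exactly 2; hence the curve has a-number `4 - rank = 2`. -/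
theorem stmt5 {k : Type*} [Field k] [IsAlgClosed k] [CharP k 3]
    (f : k[X]) (hf : f = X ^ 9 + C 2 * X ^ 7 + X ^ 3 + X) :
    disc9 f ≠ 0 ∧
      ∀ H : Matrix (Fin 4) (Fin 4) k,
        (∀ i j, H i j ^ 3 = !![0, 1, 0, 0; 0, 0, 1, 0; 0, 2, 0, 0; 0, 0, 1, 0] i j) →
        H.rank = 2 ∧ 4 - H.rank = 2 :=
  stmt5_general f hf
end

section
/- Let k be a field of characteristic 3 and X the hyperelliptic curve y^2 = f(x) with f(x) = x^9 + a_7 x^7 + a_6 x^6 + a_4 x^4 + a_3 x^3 + x of nonzero discriminant. Then the Cartier operator C on rational differentials satisfies C((1/(xy)) dx) = (x^2/y + a_6^{1/3} x/y + a_3^{1/3}/y) dx, using the identity -d^2(1/(xy))/dx^2 = (x^9 + a_6 x^6 + a_3 x^3)/(x^3 y^3) on X. -/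
/-!
In characteristic `3` the polynomial `f` has `f'' = 0`, so its "cube part" `g = f - x f'`
(here `x⁹ + a₆x⁶ + a₃x³`) has `g' = 0`. Differentiating `x⁻¹y⁻¹` on `y² = f` with
`y' = f'/(2y)` gives `g/(2x²f) · y⁻¹`, and since `g` behaves as a constant the second
derivative collapses to `-g/(x³f) · y⁻¹`. Finally `g = x³(x² + ux + v)³` by the Frobenius
identity `(a + b)³ = a³ + b³`.
-/

open Polynomial Matrix

/-- Derivative of a rational function, via the quotient rule on the reduced
numerator/denominator representation. -/
noncomputable def ratDeriv {k : Type*} [Field k] (q : RatFunc k) : RatFunc k :=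
  algebraMap k[X] (RatFunc k)
      (Polynomial.derivative q.num * q.denom - q.num * Polynomial.derivative q.denom) /
    algebraMap k[X] (RatFunc k) (q.denom ^ 2)

/-- On the curve `y² = F`, the derivative of `G · y⁻¹` (with `G ∈ k(x)`) is
`twistedDeriv F G · y⁻¹`, since `y' = F' / (2y)`. -/
noncomputable def twistedDeriv {k : Type*} [Field k] (F G : RatFunc k) : RatFunc k :=
  ratDeriv G - G * ratDeriv F / (2 * F)

section QuotientRule

variable {k : Type*} [Field k]

local notation "φ" => algebraMap k[X] (RatFunc k)

theorem ratDeriv_algebraMap_div (p q : k[X]) (hq : q ≠ 0) :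
    ratDeriv (φ p / φ q) = φ (derivative p * q - p * derivative q) / φ (q ^ 2) := by
  set r := φ p / φ q
  have hden : r.denom ≠ 0 := r.denom_ne_zero
  have hcross : r.num * q = p * r.denom := by
    apply RatFunc.algebraMap_injective k
    rw [map_mul, map_mul, ← div_eq_div_iff (RatFunc.algebraMap_ne_zero hden)
      (RatFunc.algebraMap_ne_zero hq), RatFunc.num_div_denom]
  have hcross' := congrArg derivative hcross
  simp only [derivative_mul] at hcross'
  rw [ratDeriv, div_eq_div_iff (RatFunc.algebraMap_ne_zero (pow_ne_zero 2 hden))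
    (RatFunc.algebraMap_ne_zero (pow_ne_zero 2 hq)), ← map_mul, ← map_mul]
  congr 1
  linear_combination (q * r.denom) * hcross' -
    (derivative r.denom * q + derivative q * r.denom) * hcross

theorem ratDeriv_algebraMap (p : k[X]) : ratDeriv (φ p) = φ (derivative p) := by
  simpa using ratDeriv_algebraMap_div p 1 one_ne_zero

theorem twistedDeriv_algebraMap_div (h2 : (2 : k) ≠ 0) {f : k[X]} (hf : f ≠ 0) (p : k[X])
    {q : k[X]} (hq : q ≠ 0) :
    twistedDeriv (φ f) (φ p / φ q) =
      φ (2 * f * (derivative p * q - p * derivative q) - p * q * derivative f) /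
        φ (2 * f * q ^ 2) := by
  have h2' : (2 : RatFunc k) ≠ 0 := by
    rw [← map_ofNat (algebraMap k (RatFunc k)) 2]
    exact (_root_.map_ne_zero _).mpr h2
  rw [twistedDeriv, ratDeriv_algebraMap_div p q hq, ratDeriv_algebraMap]
  have hfφ := RatFunc.algebraMap_ne_zero hf
  have hqφ := RatFunc.algebraMap_ne_zero hq
  simp only [map_sub, map_mul, map_pow, map_ofNat]
  field_simp

end QuotientRule

section CharThree

variable {k : Type*} [Field k] [CharP k 3]

local notation "φ" => algebraMap k[X] (RatFunc k)

theorem neg_twistedDeriv_twistedDeriv_inv_X {f : k[X]} (hf : f ≠ 0)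
    (hf'' : derivative (derivative f) = 0) :
    -twistedDeriv (φ f) (twistedDeriv (φ f) RatFunc.X⁻¹) =
      φ (f - X * derivative f) / (RatFunc.X ^ 3 * φ f) := by
  have h3 : (3 : k[X]) = 0 := by exact_mod_cast CharP.cast_eq_zero k[X] 3
  have h2 : (2 : k) ≠ 0 := Ring.two_ne_zero (by rw [ringChar.eq k 3]; norm_num)
  set g := f - X * derivative f
  have hg' : derivative g = 0 := by
    simp only [g, derivative_sub, derivative_mul, derivative_X, hf'']
    ring
  have hq : (2 * f * X ^ 2 : k[X]) ≠ 0 := by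
    refine mul_ne_zero (mul_ne_zero ?_ hf) (pow_ne_zero 2 X_ne_zero)
    rw [← map_ofNat C 2]
    exact C_ne_zero.mpr h2
  have hG1 : twistedDeriv (φ f) RatFunc.X⁻¹ = φ g / φ (2 * f * X ^ 2) := by
    rw [← RatFunc.algebraMap_X, inv_eq_one_div, ← map_one φ,
      twistedDeriv_algebraMap_div h2 hf 1 X_ne_zero]
    congr 2
    simp only [g, derivative_one, derivative_X]
    linear_combination (-f) * h3
  have hq2 : 2 * f * (2 * f * X ^ 2) ^ 2 ≠ 0 :=
    mul_ne_zero (left_ne_zero_of_mul hq) (pow_ne_zero 2 hq)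
  rw [hG1, twistedDeriv_algebraMap_div h2 hf g hq, ← RatFunc.algebraMap_X, ← map_pow, ← map_mul,
    ← neg_div, ← map_neg, div_eq_div_iff (RatFunc.algebraMap_ne_zero hq2)
      (RatFunc.algebraMap_ne_zero (mul_ne_zero (pow_ne_zero 3 X_ne_zero) hf)), ← map_mul, ← map_mul]
  refine congrArg φ ?_
  clear_value g
  simp only [hg', derivative_mul, derivative_X_pow, derivative_ofNat, Nat.cast_ofNat, map_ofNat]
  linear_combination (2 * f ^ 2 * X ^ 5 * g * derivative f) * h3

theorem X_pow_three_mul_cube (u v : k) :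
    X ^ 3 * (X ^ 2 + C u * X + C v) ^ 3 = X ^ 9 + C (u ^ 3) * X ^ 6 + C (v ^ 3) * X ^ 3 := by
  rw [add_pow_char, add_pow_char, mul_pow, map_pow, map_pow]
  ring

theorem derivative_X_pow_nine_add (a3 a4 a6 a7 : k) :
    derivative (X ^ 9 + C a7 * X ^ 7 + C a6 * X ^ 6 + C a4 * X ^ 4 + C a3 * X ^ 3 + X : k[X]) =
      C a7 * X ^ 6 + C a4 * X ^ 3 + 1 := by
  have h3 : (3 : k[X]) = 0 := by exact_mod_cast CharP.cast_eq_zero k[X] 3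
  simp only [derivative_add, derivative_mul, derivative_C, derivative_X_pow, derivative_X,
    map_natCast]
  push_cast
  linear_combination
    (3 * X ^ 8 + 2 * C a7 * X ^ 6 + 2 * C a6 * X ^ 5 + C a4 * X ^ 3 + C a3 * X ^ 2) * h3

end CharThree

theorem stmt6_general {k : Type*} [Field k] [CharP k 3]
    (a3 a4 a6 a7 : k) (f : k[X])
    (hf : f = X ^ 9 + C a7 * X ^ 7 + C a6 * X ^ 6 + C a4 * X ^ 4 + C a3 * X ^ 3 + X)
    (F : RatFunc k) (hF : F = algebraMap k[X] (RatFunc k) f)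
    (G0 G1 G2 : RatFunc k)
    (hG0 : G0 = (RatFunc.X)⁻¹)
    (hG1 : G1 = ratDeriv G0 - G0 * ratDeriv F / (2 * F))
    (hG2 : G2 = ratDeriv G1 - G1 * ratDeriv F / (2 * F)) :
    -G2 = algebraMap k[X] (RatFunc k) (X ^ 9 + C a6 * X ^ 6 + C a3 * X ^ 3) /
        (RatFunc.X ^ 3 * F) ∧
      ∀ u v : k, u ^ 3 = a6 → v ^ 3 = a3 →
        algebraMap k[X] (RatFunc k) ((X ^ 2 + C u * X + C v) ^ 3) = -G2 * F := by
  have hf0 : f ≠ 0 := by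
    rw [hf]
    exact Monic.ne_zero (by monicity!)
  have hf' : derivative f = C a7 * X ^ 6 + C a4 * X ^ 3 + 1 :=
    hf ▸ derivative_X_pow_nine_add a3 a4 a6 a7
  have hf'' : derivative (derivative f) = 0 := by
    have h3 : (3 : k[X]) = 0 := by exact_mod_cast CharP.cast_eq_zero k[X] 3
    simp only [hf', derivative_add, derivative_mul, derivative_C, derivative_X_pow,
      derivative_one, map_natCast]
    push_cast
    linear_combination (2 * C a7 * X ^ 5 + C a4 * X ^ 2) * h3
  have hG2' : -G2 = algebraMap k[X] (RatFunc k) (X ^ 9 + C a6 * X ^ 6 + C a3 * X ^ 3) /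
      (RatFunc.X ^ 3 * F) := by
    subst hG2 hG1 hG0 hF
    rw [← show f - X * derivative f = X ^ 9 + C a6 * X ^ 6 + C a3 * X ^ 3 by rw [hf', hf]; ring]
    exact neg_twistedDeriv_twistedDeriv_inv_X hf0 hf''
  refine ⟨hG2', fun u v hu hv => ?_⟩
  rw [hG2', hF, div_mul_eq_mul_div, mul_div_mul_right _ _ (RatFunc.algebraMap_ne_zero hf0),
    eq_div_iff (pow_ne_zero 3 RatFunc.X_ne_zero), ← RatFunc.algebraMap_X, ← map_pow, ← map_mul,
    mul_comm, X_pow_three_mul_cube, hu, hv]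

/-- char 3, `X : y² = f(x)` with
`f = x^9 + a_7x^7 + a_6x^6 + a_4x^4 + a_3x^3 + x` of nonzero discriminant.  Writing
`1/(xy) = G₀·y⁻¹` with `G₀ = 1/x ∈ k(x)`, and using `y' = f'/(2y)`, the coefficient of
`y⁻¹` in the `i`-th derivative of `1/(xy)` is `Gᵢ₊₁ = Gᵢ' - Gᵢ·f'/(2f)`.  The identity
`-d²(1/(xy))/dx² = (x^9 + a_6x^6 + a_3x^3)/(x³y³)` reads `-G₂ = (x^9+a_6x^6+a_3x^3)/(x³f)`
(since `y³ = yf`), and the Cartier operator formula `C(h dx) = (-h'')^{1/3} dx` then gives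
`C((1/(xy))dx) = (x²/y + a_6^{1/3}x/y + a_3^{1/3}/y)dx`, i.e.
`((x² + a_6^{1/3}x + a_3^{1/3})/y)³ = -G₂·y⁻³`, i.e. `(x²+ux+v)³ = -G₂·f` for the cube
roots `u, v`. -/
theorem stmt6 {k : Type*} [Field k] [CharP k 3]
    (a3 a4 a6 a7 : k) (f : k[X])
    (hf : f = X ^ 9 + C a7 * X ^ 7 + C a6 * X ^ 6 + C a4 * X ^ 4 + C a3 * X ^ 3 + X)
    (hdisc : disc9 f ≠ 0)
    (F : RatFunc k) (hF : F = algebraMap k[X] (RatFunc k) f)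
    (G0 G1 G2 : RatFunc k)
    (hG0 : G0 = (RatFunc.X)⁻¹)
    (hG1 : G1 = ratDeriv G0 - G0 * ratDeriv F / (2 * F))
    (hG2 : G2 = ratDeriv G1 - G1 * ratDeriv F / (2 * F)) :
    -G2 = algebraMap k[X] (RatFunc k) (X ^ 9 + C a6 * X ^ 6 + C a3 * X ^ 3) /
        (RatFunc.X ^ 3 * F) ∧
      ∀ u v : k, u ^ 3 = a6 → v ^ 3 = a3 →
        algebraMap k[X] (RatFunc k) ((X ^ 2 + C u * X + C v) ^ 3) = -G2 * F :=
  stmt6_general a3 a4 a6 a7 f hf F hF G0 G1 G2 hG0 hG1 hG2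
end

section
/- Let p = 5r + 2 be an odd prime (so r is odd or r = 0) and ξ ∈ k \ F_p with k algebraically closed of characteristic p. Then the coefficients of x^{p-1} in x^{2r}((x-1)(x-ξ))^{2r} and in x^{2r+1}((x-1)(x-ξ))^{2r} are not both zero. -/
open Polynomial

/-!
Put `h = (X - 1)(X - ξ) = X² + bX + c` and `g = h^{2r}`; the two coefficients are `g_{3r+1}` and
`g_{3r}`. The differential equation `h g' = 2r h' g` turns into the three-term recurrence
`n g_n + (n+1) b g_{n+1} + (n+2) c g_{n+2} = 2r (2 g_n + b g_{n+1})`. If two consecutive coefficients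
vanish, then, since `c = ξ ≠ 0` and `n + 2 ≤ 4r < p`, so does the next one; climbing from `3r` we
reach the leading coefficient `g_{4r} = 1`.
-/

namespace Polynomial

variable {R : Type*} [CommRing R]

theorem coeff_X_mul_derivative (f : R[X]) (n : ℕ) :
    (X * derivative f).coeff n = n * f.coeff n := by
  cases n with
  | zero => simp
  | succ n => rw [coeff_X_mul, coeff_derivative]; push_cast; ring

theorem mul_derivative_pow (h : R[X]) (m : ℕ) :
    h * derivative (h ^ m) = C (m : R) * derivative h * h ^ m := by
  cases m with
  | zero => simp
  | succ m => rw [derivative_pow_succ, pow_succ]; push_cast; ring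

theorem coeff_recurrence_of_quadratic_mul_derivative {g : R[X]} {b c m : R}
    (hg : (X ^ 2 + C b * X + C c) * derivative g
      = C m * derivative (X ^ 2 + C b * X + C c) * g) (n : ℕ) :
    n * g.coeff n + b * ((n + 1) * g.coeff (n + 1)) + c * ((n + 2) * g.coeff (n + 2))
      = m * (2 * g.coeff n + b * g.coeff (n + 1)) := by
  have hderiv : derivative (X ^ 2 + C b * X + C c) = C 2 * X + C b := by
    simp only [derivative_add, derivative_sq, derivative_mul, derivative_C, derivative_X]
    ring
  have lhs : X * ((X ^ 2 + C b * X + C c) * derivative g)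
      = X ^ 2 * (X * derivative g) + C b * (X * (X * derivative g)) + C c * (X * derivative g) := by
    ring
  have rhs : X * (C m * (C 2 * X + C b) * g) = C m * (C 2 * (X ^ 2 * g) + C b * (X * g)) := by
    ring
  have key := congrArg (fun f => (X * f).coeff (n + 2)) hg
  simp only [hderiv, lhs, rhs, coeff_add, coeff_C_mul, coeff_X_pow_mul, coeff_X_mul,
    coeff_X_mul_derivative, coeff_derivative] at key
  push_cast at key
  linear_combination key

variable [IsDomain R]

theorem coeff_eq_zero_of_quadratic_mul_derivative {g : R[X]} {b c m : R} (hc : c ≠ 0)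
    (hg : (X ^ 2 + C b * X + C c) * derivative g
      = C m * derivative (X ^ 2 + C b * X + C c) * g)
    {n N : ℕ} (hN : ∀ i, n + 2 ≤ i → i ≤ N → (i : R) ≠ 0)
    (h₀ : g.coeff n = 0) (h₁ : g.coeff (n + 1) = 0) :
    ∀ j, n + j ≤ N → g.coeff (n + j) = 0 := by
  intro j
  induction j using Nat.twoStepInduction with
  | zero => exact fun _ => h₀
  | one => exact fun _ => h₁
  | more j ih₀ ih₁ =>
    intro hj
    have hrec := coeff_recurrence_of_quadratic_mul_derivative hg (n + j)
    have e₀ : g.coeff (n + j) = 0 := ih₀ (by omega)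
    have e₁ : g.coeff (n + j + 1) = 0 := ih₁ (by omega)
    have hnz : ((n + j + 2 : ℕ) : R) ≠ 0 := hN _ (by omega) (by omega)
    rw [e₀, e₁] at hrec
    simp only [mul_zero, zero_add, add_zero] at hrec
    push_cast at hnz
    rw [← add_assoc]
    simpa [hc, hnz] using hrec

theorem not_coeff_eq_zero_and_coeff_succ_eq_zero_of_quadratic_pow {b c : R} (hc : c ≠ 0)
    {m n : ℕ} (hn : n ≤ 2 * m)
    (hN : ∀ i, n + 2 ≤ i → i ≤ 2 * m → (i : R) ≠ 0) :
    ¬ (((X ^ 2 + C b * X + C c) ^ m).coeff n = 0 ∧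
      ((X ^ 2 + C b * X + C c) ^ m).coeff (n + 1) = 0) := by
  rintro ⟨h₀, h₁⟩
  have hmonic : (X ^ 2 + C b * X + C c).Monic := by monicity!
  have hdeg : ((X ^ 2 + C b * X + C c) ^ m).natDegree = n + (2 * m - n) := by
    have hquad_deg : (X ^ 2 + C b * X + C c).natDegree = 2 := by compute_degree!
    rw [hmonic.natDegree_pow, hquad_deg]
    omega
  have hlead := coeff_eq_zero_of_quadratic_mul_derivative hc (mul_derivative_pow _ m) hN h₀ h₁
    (2 * m - n) (by omega)
  rw [← hdeg, (hmonic.pow m).coeff_natDegree] at hlead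
  exact one_ne_zero hlead

end Polynomial

theorem stmt15_general {k : Type*} [Field k] (p r : ℕ) [CharP k p]
    (hp : p = 5 * r + 2)
    (ξ : k) (hξ : ∀ c : ℕ, ξ ≠ (c : k)) :
    ¬ ((X ^ (2 * r) * ((X - 1) * (X - C ξ)) ^ (2 * r) : k[X]).coeff (p - 1) = 0 ∧
       (X ^ (2 * r + 1) * ((X - 1) * (X - C ξ)) ^ (2 * r) : k[X]).coeff (p - 1) = 0) := by
  rintro ⟨h₁, h₀⟩
  have hquad : (X - 1) * (X - C ξ) = X ^ 2 + C (-(1 + ξ)) * X + C ξ := by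
    simp only [map_neg, map_add, map_one]
    ring
  rw [hquad, hp, show 5 * r + 2 - 1 = 3 * r + (2 * r + 1) by omega, coeff_X_pow_mul] at h₀
  rw [hquad, hp, show 5 * r + 2 - 1 = 3 * r + 1 + 2 * r by omega, coeff_X_pow_mul] at h₁
  refine not_coeff_eq_zero_and_coeff_succ_eq_zero_of_quadratic_pow (by simpa using hξ 0)
    (by omega) (fun i hi hi' hzero => ?_) ⟨h₀, h₁⟩
  have := Nat.le_of_dvd (by omega) ((CharP.cast_eq_zero_iff k p i).1 hzero)
  omega

/-- `p = 5r + 2` an odd prime (so `r` is odd or `r = 0`), `k` algebraically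
closed of characteristic `p`, `ξ ∈ k ∖ 𝔽_p`.  The coefficients of `x^{p-1}` in
`x^{2r}((x-1)(x-ξ))^{2r}` and in `x^{2r+1}((x-1)(x-ξ))^{2r}` are not both zero. -/
theorem stmt15 {k : Type*} [Field k] [IsAlgClosed k] (p r : ℕ) [Fact p.Prime] [CharP k p]
    (hp : p = 5 * r + 2) (hodd : Odd p)
    (ξ : k) (hξ : ∀ c : ℕ, ξ ≠ (c : k)) :
    ¬ ((X ^ (2 * r) * ((X - 1) * (X - C ξ)) ^ (2 * r) : k[X]).coeff (p - 1) = 0 ∧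
       (X ^ (2 * r + 1) * ((X - 1) * (X - C ξ)) ^ (2 * r) : k[X]).coeff (p - 1) = 0) :=
  stmt15_general p r hp ξ hξ
end

section
/- Let p = 3r + 2 be an odd prime (so r is odd) and k of characteristic p. The polynomial x^{2r+1}(x^4 + 1)^{2r+1} over k has zero coefficient at x^{np-1} for every positive integer n; likewise x^{r+i}(x^4+1)^r has zero coefficient at x^{np-1} for i = 0, 1, 2 and all n ≥ 1. -/
/-!
The exponents occurring in `X ^ a * (X ^ 4 + 1) ^ b` are all of the form `a + 4 * j` with
`j ≤ b`. For `p = 3 * r + 2` with `r` odd, `n * p - 1 - a` is, for each of the relevant `a` and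
`b`, either `≢ 0 (mod 4)` (small `n`) or larger than `4 * b` (large `n`).
-/

open Polynomial

section

variable {R : Type*} [CommSemiring R]

theorem coeff_X_pow_add_one_pow_eq_zero {d b j : ℕ} (hd : 0 < d) (h : ¬ d ∣ j ∨ d * b < j) :
    ((X ^ d + 1) ^ b : R[X]).coeff j = 0 := by
  have hexpand : ((X ^ d + 1) ^ b : R[X]) = expand R d ((X + 1) ^ b) := by
    rw [map_pow, map_add, expand_X, map_one]
  rw [hexpand, coeff_expand hd]
  split_ifs with hdj
  · obtain ⟨c, rfl⟩ := hdj
    have hc : b < c := by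
      rcases h with h | h
      · exact absurd (dvd_mul_right d c) h
      · exact lt_of_mul_lt_mul_left h (Nat.zero_le d)
    rw [Nat.mul_div_cancel_left c hd]
    have hdeg : ((X + 1) ^ b : R[X]).natDegree ≤ b := by compute_degree
    exact coeff_eq_zero_of_natDegree_lt (hdeg.trans_lt hc)
  · rfl

theorem coeff_X_pow_mul_X_pow_add_one_pow_eq_zero {a d b m : ℕ} (hd : 0 < d)
    (h : a ≤ m → ¬ d ∣ m - a ∨ d * b < m - a) :
    (X ^ a * (X ^ d + 1) ^ b : R[X]).coeff m = 0 := by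
  rw [coeff_X_pow_mul']
  split_ifs with ham
  exacts [coeff_X_pow_add_one_pow_eq_zero hd (h ham), rfl]

end

theorem stmt18_general {k : Type*} [Field k] (p r : ℕ)
    (hp : p = 3 * r + 2) (hodd : Odd p) :
    (∀ n : ℕ, 1 ≤ n →
        ((X ^ (2 * r + 1) * (X ^ 4 + 1) ^ (2 * r + 1) : k[X])).coeff (n * p - 1) = 0) ∧
      ∀ i : ℕ, i ≤ 2 → ∀ n : ℕ, 1 ≤ n →
        ((X ^ (r + i) * (X ^ 4 + 1) ^ r : k[X])).coeff (n * p - 1) = 0 := by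
  obtain ⟨t, ht⟩ := hodd
  have hr : r % 2 = 1 := by omega
  subst hp
  refine ⟨fun n hn => ?_, fun i hi n hn => ?_⟩ <;>
    refine coeff_X_pow_mul_X_pow_add_one_pow_eq_zero four_pos fun _ => ?_
  · rcases Nat.lt_or_ge n 4 with hn4 | hn4
    · left
      interval_cases n <;> omega
    · right
      have := Nat.mul_le_mul_right (3 * r + 2) hn4
      omega
  · rcases Nat.lt_or_ge n 2 with hn2 | hn2
    · left
      interval_cases n
      omega
    · right
      have := Nat.mul_le_mul_right (3 * r + 2) hn2
      omega

/-- `p = 3r + 2` an odd prime (so `r` is odd), `k` of characteristic `p`.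
The polynomial `x^{2r+1}(x⁴+1)^{2r+1}` has zero coefficient at `x^{np-1}` for every `n ≥ 1`;
likewise `x^{r+i}(x⁴+1)^r` for `i = 0, 1, 2` and all `n ≥ 1`. -/
theorem stmt18 {k : Type*} [Field k] (p r : ℕ) [Fact p.Prime] [CharP k p]
    (hp : p = 3 * r + 2) (hodd : Odd p) :
    (∀ n : ℕ, 1 ≤ n →
        ((X ^ (2 * r + 1) * (X ^ 4 + 1) ^ (2 * r + 1) : k[X])).coeff (n * p - 1) = 0) ∧
      ∀ i : ℕ, i ≤ 2 → ∀ n : ℕ, 1 ≤ n →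
        ((X ^ (r + i) * (X ^ 4 + 1) ^ r : k[X])).coeff (n * p - 1) = 0 :=
  stmt18_general p r hp hodd
end
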